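/- Let P be a finite PIP and x ∈ P, and let P_x = {y ∈ P : y is consistent with x and incomparable with x}, viewed as a sub-PIP. Then the faces C(I, M) of ⊞_P with x ∈ M are in order-preserving bijection with the faces of ⊞_{P_x}: given such (I, M), the pair (J, N) = (I \ ↓x, M \ {x}) is a face of ⊞_{P_x} (J is a consistent downset of P_x and N ⊆ max J), and conversely (I, M) = (J ∪ ↓x, N ∪ {x}); and C(I,M) ⊆ C(I',M') in ⊞_P iff the corresponding faces satisfy containment in ⊞_{P_x}. -/

import Mathlib

/-!
If `x ∈ M` for a face `(I, M)`, then `x` is maximal in `I`, so `I` is the disjoint union of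
`↓x` and `I \ ↓x`; the elements of `I \ ↓x` are consistent with `x` (as `I` is consistent),
not below `x`, and not above `x` (by maximality), i.e. they lie in `P_x`. Conversely, gluing
`↓x` onto a consistent downset `J` of `P_x` gives a consistent downset of `P`: since
inconsistency is inherited upwards, an inconsistency inside `↓x` or between `↓x` and `J` would
push up to `x ↮ x` or to an inconsistency between `x` and an element of `P_x`. Containment of
faces is unaffected: on faces with `↓x ⊆ I` and `x ∈ M`, removing `↓x` from `I` and `x` from
`M` loses no information.
-/

open Finset

variable {P : Type*} [Fintype P] [DecidableEq P] [PartialOrder P]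

/-- A subset is consistent if it contains no inconsistent pair. -/
def Consistent (incons : P → P → Prop) (S : Finset P) : Prop :=
  ∀ a ∈ S, ∀ b ∈ S, ¬ incons a b

/-- A downset (order ideal). -/
def IsDownset (I : Finset P) : Prop :=
  ∀ x ∈ I, ∀ y, y ≤ x → y ∈ I

open Classical in
/-- The maximal elements of a finite set. -/
noncomputable def maxElems (I : Finset P) : Finset P :=
  I.filter (fun x => ∀ y ∈ I, ¬ x < y)

open Classical in
/-- The downset generated by a set. -/
noncomputable def downGen (A : Finset P) : Finset P :=
  Finset.univ.filter (fun x => ∃ a ∈ A, x ≤ a)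

/-- A consistent antichain: the faces of the crossing complex `Δ_P`. -/
def ConsAntichain (incons : P → P → Prop) (A : Finset P) : Prop :=
  (∀ a ∈ A, ∀ b ∈ A, a ≠ b → ¬ a ≤ b) ∧ Consistent incons A

/-- A face of the cubical complex `⊞_P`: a pair (I, M) with I a consistent
downset and M ⊆ max I. -/
def IsFace (incons : P → P → Prop) (I M : Finset P) : Prop :=
  IsDownset I ∧ Consistent incons I ∧ M ⊆ maxElems I

/-- The face-containment order on faces of `⊞_P`:
`C(I',M') ⊆ C(I,M)` iff `M' ⊆ M` and `I \ M ⊆ I' ⊆ I`. -/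
def FaceLE (p q : Finset P × Finset P) : Prop :=
  p.2 ⊆ q.2 ∧ q.1 \ q.2 ⊆ p.1 ∧ p.1 ⊆ q.1

open Classical in
/-- The principal downset `↓x`. -/
noncomputable def downOf (x : P) : Finset P := Finset.univ.filter (· ≤ x)

open Classical in
/-- The sub-PIP `P_x` of elements consistent and incomparable with `x`
(the hyperplane PIP). -/
noncomputable def subPIP (incons : P → P → Prop) (x : P) : Finset P :=
  Finset.univ.filter (fun y => ¬ incons y x ∧ ¬ y ≤ x ∧ ¬ x ≤ y)

/-- A face of `⊞_{P_x}`: a consistent downset of the sub-PIP `P_x` together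
with a subset of its maximal elements. -/
def IsFaceSub (incons : P → P → Prop) (x : P) (J N : Finset P) : Prop :=
  J ⊆ subPIP incons x ∧
  (∀ a ∈ J, ∀ b ∈ subPIP incons x, b ≤ a → b ∈ J) ∧
  Consistent incons J ∧ N ⊆ maxElems J

omit [DecidableEq P] in
@[simp]
lemma mem_downOf {x y : P} : y ∈ downOf x ↔ y ≤ x := by
  simp [downOf]

omit [DecidableEq P] in
@[simp]
lemma mem_subPIP {incons : P → P → Prop} {x y : P} :
    y ∈ subPIP incons x ↔ ¬ incons y x ∧ ¬ y ≤ x ∧ ¬ x ≤ y := by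
  simp [subPIP]

lemma mem_maxElems {I : Finset P} {y : P} :
    y ∈ maxElems I ↔ y ∈ I ∧ ∀ z ∈ I, ¬ y < z := by
  simp [maxElems]

omit [DecidableEq P] in
lemma disjoint_subPIP_downOf (incons : P → P → Prop) (x : P) :
    Disjoint (subPIP incons x) (downOf x) :=
  Finset.disjoint_left.2 fun _ hy hyx => (mem_subPIP.1 hy).2.1 (mem_downOf.1 hyx)

omit [Fintype P] [PartialOrder P] in
lemma FaceLE.sdiff_iff {I M I' M' D E : Finset P} (hEM' : E ⊆ M') (hED : E ⊆ D)
    (hDI : D ⊆ I) (hDI' : D ⊆ I') :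
    FaceLE (I, M) (I', M') ↔ FaceLE (I \ D, M \ E) (I' \ D, M' \ E) := by
  simp only [FaceLE, Finset.subset_iff, Finset.mem_sdiff] at *
  grind

namespace IsFace

variable {incons : P → P → Prop} {I M : Finset P} {x : P}

lemma downOf_subset (hf : IsFace incons I M) (hx : x ∈ M) : downOf x ⊆ I :=
  fun _ hy => hf.1 x (mem_maxElems.1 (hf.2.2 hx)).1 _ (mem_downOf.1 hy)

lemma sdiff_downOf_subset_subPIP (hf : IsFace incons I M) (hx : x ∈ M) :
    I \ downOf x ⊆ subPIP incons x := by
  obtain ⟨hxI, hxmax⟩ := mem_maxElems.1 (hf.2.2 hx)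
  intro y hy
  obtain ⟨hyI, hyx⟩ := Finset.mem_sdiff.1 hy
  rw [mem_downOf] at hyx
  exact mem_subPIP.2 ⟨hf.2.1 y hyI x hxI, hyx,
    fun hxy => hxmax y hyI (hxy.lt_of_ne fun h => hyx h.ge)⟩

lemma isFaceSub_sdiff_downOf_erase (hf : IsFace incons I M) (hx : x ∈ M) :
    IsFaceSub incons x (I \ downOf x) (M.erase x) := by
  have hsub := hf.sdiff_downOf_subset_subPIP hx
  obtain ⟨hdown, hcons, hM⟩ := hf
  have hxI : x ∈ I := (mem_maxElems.1 (hM hx)).1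
  refine ⟨hsub, ?_, ?_, ?_⟩
  · intro a ha b hb hba
    exact Finset.mem_sdiff.2 ⟨hdown a (Finset.mem_sdiff.1 ha).1 b hba,
      fun hbx => (mem_subPIP.1 hb).2.1 (mem_downOf.1 hbx)⟩
  · exact fun a ha b hb => hcons a (Finset.mem_sdiff.1 ha).1 b (Finset.mem_sdiff.1 hb).1
  · intro m hm
    obtain ⟨hmx, hmM⟩ := Finset.mem_erase.1 hm
    obtain ⟨hmI, hmmax⟩ := mem_maxElems.1 (hM hmM)
    refine mem_maxElems.2 ⟨Finset.mem_sdiff.2 ⟨hmI, fun hmx' => ?_⟩,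
      fun z hz => hmmax z (Finset.mem_sdiff.1 hz).1⟩
    exact hmmax x hxI ((mem_downOf.1 hmx').lt_of_ne hmx)

end IsFace

namespace IsFaceSub

variable {incons : P → P → Prop} {x : P} {J N : Finset P}

lemma union_downOf_sdiff_downOf (hf : IsFaceSub incons x J N) :
    (J ∪ downOf x) \ downOf x = J :=
  Finset.union_sdiff_cancel_right
    ((disjoint_subPIP_downOf incons x).mono_left hf.1)

lemma self_notMem (hf : IsFaceSub incons x J N) : x ∉ N :=
  fun hx => by simpa using hf.1 (mem_maxElems.1 (hf.2.2.2 hx)).1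

lemma isDownset_union_downOf (hup : ∀ a b a' b', incons a b → a ≤ a' → b ≤ b' → incons a' b')
    (hf : IsFaceSub incons x J N) : IsDownset (J ∪ downOf x) := by
  intro z hz y hyz
  simp only [Finset.mem_union, mem_downOf] at hz ⊢
  rcases hz with hzJ | hzx
  · by_cases hyx : y ≤ x
    · exact Or.inr hyx
    · obtain ⟨hzx, -, hxz⟩ := mem_subPIP.1 (hf.1 hzJ)
      exact Or.inl (hf.2.1 z hzJ y (mem_subPIP.2
        ⟨fun hi => hzx (hup y x z x hi hyz le_rfl), hyx, fun hxy => hxz (hxy.trans hyz)⟩) hyz)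
  · exact Or.inr (hyz.trans hzx)

lemma consistent_union_downOf (hirr : ∀ a, ¬ incons a a)
    (hsymm : ∀ a b, incons a b → incons b a)
    (hup : ∀ a b a' b', incons a b → a ≤ a' → b ≤ b' → incons a' b')
    (hf : IsFaceSub incons x J N) : Consistent incons (J ∪ downOf x) := by
  have hJx : ∀ a ∈ J, ∀ b ≤ x, ¬ incons a b := fun a ha b hbx hab =>
    (mem_subPIP.1 (hf.1 ha)).1 (hup a b a x hab le_rfl hbx)
  intro a ha b hb hab
  simp only [Finset.mem_union, mem_downOf] at ha hb
  rcases ha with haJ | hax <;> rcases hb with hbJ | hbx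
  · exact hf.2.2.1 a haJ b hbJ hab
  · exact hJx a haJ b hbx hab
  · exact hJx b hbJ a hax (hsymm a b hab)
  · exact hirr x (hup a b x x hab hax hbx)

lemma insert_subset_maxElems_union_downOf (hf : IsFaceSub incons x J N) :
    insert x N ⊆ maxElems (J ∪ downOf x) := by
  intro m hm
  rw [mem_maxElems]
  rcases Finset.mem_insert.1 hm with rfl | hmN
  · refine ⟨Finset.mem_union_right _ (mem_downOf.2 le_rfl), fun z hz hlt => ?_⟩
    rcases Finset.mem_union.1 hz with hzJ | hzx
    · exact (mem_subPIP.1 (hf.1 hzJ)).2.2 hlt.le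
    · exact (hlt.trans_le (mem_downOf.1 hzx)).false
  · obtain ⟨hmJ, hmmax⟩ := mem_maxElems.1 (hf.2.2.2 hmN)
    refine ⟨Finset.mem_union_left _ hmJ, fun z hz hlt => ?_⟩
    rcases Finset.mem_union.1 hz with hzJ | hzx
    · exact hmmax z hzJ hlt
    · exact (mem_subPIP.1 (hf.1 hmJ)).2.1 (hlt.le.trans (mem_downOf.1 hzx))

lemma isFace_union_downOf_insert (hirr : ∀ a, ¬ incons a a)
    (hsymm : ∀ a b, incons a b → incons b a)
    (hup : ∀ a b a' b', incons a b → a ≤ a' → b ≤ b' → incons a' b')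
    (hf : IsFaceSub incons x J N) : IsFace incons (J ∪ downOf x) (insert x N) :=
  ⟨hf.isDownset_union_downOf hup, hf.consistent_union_downOf hirr hsymm hup,
    hf.insert_subset_maxElems_union_downOf⟩

end IsFaceSub

/-- The faces `C(I,M)` of `⊞_P` with `x ∈ M` are in order-preserving
bijection with the faces of `⊞_{P_x}` via
`(I, M) ↦ (I \ ↓x, M \ {x})` with inverse `(J, N) ↦ (J ∪ ↓x, N ∪ {x})`. -/
theorem hyperplane_is_cubical_complex_of_subPIP (incons : P → P → Prop)
    (hirr : ∀ a, ¬ incons a a)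
    (hsymm : ∀ a b, incons a b → incons b a)
    (hup : ∀ a b a' b', incons a b → a ≤ a' → b ≤ b' → incons a' b')
    (x : P) :
    (∀ I M : Finset P, IsFace incons I M → x ∈ M →
        IsFaceSub incons x (I \ downOf x) (M.erase x) ∧
        (I \ downOf x) ∪ downOf x = I ∧ insert x (M.erase x) = M) ∧
    (∀ J N : Finset P, IsFaceSub incons x J N →
        IsFace incons (J ∪ downOf x) (insert x N) ∧
        (J ∪ downOf x) \ downOf x = J ∧ (insert x N).erase x = N) ∧
    (∀ I M I' M' : Finset P,
        IsFace incons I M → x ∈ M → IsFace incons I' M' → x ∈ M' →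
        (FaceLE (I, M) (I', M') ↔
          FaceLE (I \ downOf x, M.erase x) (I' \ downOf x, M'.erase x))) := by
  refine ⟨fun I M hf hx => ?_, fun J N hf => ?_, fun I M I' M' hf hx hf' hx' => ?_⟩
  · exact ⟨hf.isFaceSub_sdiff_downOf_erase hx,
      Finset.sdiff_union_of_subset (hf.downOf_subset hx), Finset.insert_erase hx⟩
  · exact ⟨hf.isFace_union_downOf_insert hirr hsymm hup, hf.union_downOf_sdiff_downOf,
      Finset.erase_insert hf.self_notMem⟩
  · simp only [Finset.erase_eq]
    exact FaceLE.sdiff_iff (Finset.singleton_subset_iff.2 hx')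
      (Finset.singleton_subset_iff.2 (mem_downOf.2 le_rfl))
      (hf.downOf_subset hx) (hf'.downOf_subset hx')
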